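/- Let 𝓟 be a finite nonempty class of transitions and 𝓡 a finite nonempty class of mean-reward functions over a finite policy class Π, let 𝓜 = 𝓟 × 𝓡, let P* ∈ 𝓟, let γ > 0, and let T ≥ 1. For each t ∈ {1,…,T} let μ^t ∈ Δ(𝓟), define V̂^{μ^t}_{rf,γ}(p_exp, R) := inf_{p_out∈Δ(Π)} sup_{P∈𝓟} { E_{π∼p_out}[ f^{P,R}(π_{P,R}) − f^{P,R}(π) ] − γ·E_{π∼p_exp} E_{P̂∼μ^t}[ D_H^2(P(π), P̂(π)) ] }, let p_exp^t ∈ Δ(Π) minimize p_exp ↦ sup_{R∈𝓡} V̂^{μ^t}_{rf,γ}(p_exp, R) over Δ(Π), and for each R ∈ 𝓡 let p_out^t(R) ∈ Δ(Π) attain the inner infimum in V̂^{μ^t}_{rf,γ}(p_exp^t, R). Then sup_{R*∈𝓡} { f^{P*,R*}(π_{P*,R*}) − (1/T)·Σ_{t=1}^T E_{π∼p_out^t(R*)}[ f^{P*,R*}(π) ] } ≤ rfdec̄_γ(𝓜) + (γ/T) · Σ_{t=1}^T E_{π∼p_exp^t} E_{P̄∼μ^t}[ D_H^2( P*(π), P̄(π)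 ) ]. -/

import Mathlib

open MeasureTheory ProbabilityTheory

noncomputable section

/-- Squared Hellinger distance between two measures, computed with respect to the
(dominating) measure `P + Q`. -/
def hellingerSq {Ω : Type*} [MeasurableSpace Ω] (P Q : Measure Ω) : ℝ :=
  ∫ x, (Real.sqrt ((P.rnDeriv (P + Q) x).toReal)
      - Real.sqrt ((Q.rnDeriv (P + Q) x).toReal)) ^ 2 ∂(P + Q)

/-- The set `Δ(ι)` of probability distributions on a finite set `ι`. -/
def ProbDist (ι : Type*) [Fintype ι] : Type _ :=
  {p : ι → ℝ // (∀ i, 0 ≤ p i) ∧ ∑ i, p i = 1}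

variable {O : Type*} [MeasurableSpace O] {H : ℕ} {Pol : Type*} [Fintype Pol]
  {ιP : Type*} [Fintype ιP] {ιR : Type*} [Fintype ιR]

/-- The value `f^{P,R}(π)` of policy `π` in the model with transition `Trans p` and mean
reward `Rew r`. -/
def fval (Trans : ιP → Pol → Measure O) (Rew : ιR → O → Fin H → ℝ)
    (p : ιP) (r : ιR) (π : Pol) : ℝ :=
  ∫ o, (∑ h, Rew r o h) ∂(Trans p π)

/-- The inner objective of the reward-free E2D risk, as a function of `p_out`. -/
def Grf (γ : ℝ) (Trans : ιP → Pol → Measure O) (Rew : ιR → O → Fin H → ℝ)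
    (πopt : ιP → ιR → Pol) (μ : ProbDist ιP) (pexp : ProbDist Pol) (r : ιR)
    (pout : ProbDist Pol) : ℝ :=
  ⨆ p : ιP,
    (∑ π, pout.1 π * (fval Trans Rew p r (πopt p r) - fval Trans Rew p r π))
      - γ * ∑ π, pexp.1 π * ∑ q, μ.1 q * hellingerSq (Trans p π) (Trans q π)

/-- The reward-free E2D risk `V̂^μ_{rf,γ}(p_exp, R)`. -/
def Vrf (γ : ℝ) (Trans : ιP → Pol → Measure O) (Rew : ιR → O → Fin H → ℝ)
    (πopt : ιP → ιR → Pol) (μ : ProbDist ιP) (pexp : ProbDist Pol) (r : ιR) : ℝ :=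
  ⨅ pout : ProbDist Pol, Grf γ Trans Rew πopt μ pexp r pout

/-- The Reward-Free Decision-Estimation Coefficient `rfdec_γ(𝓜, μ̄)`. -/
def rfdec (γ : ℝ) (Trans : ιP → Pol → Measure O) (Rew : ιR → O → Fin H → ℝ)
    (πopt : ιP → ιR → Pol) (μbar : ProbDist ιP) : ℝ :=
  ⨅ pexp : ProbDist Pol, ⨆ r : ιR, ⨅ pout : ProbDist Pol, ⨆ p : ιP,
    (∑ π, pout.1 π * (fval Trans Rew p r (πopt p r) - fval Trans Rew p r π))
      - γ * ∑ π, pexp.1 π * ∑ q, μbar.1 q * hellingerSq (Trans p π) (Trans q π)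

/-- `rfdec̄_γ(𝓜) = sup_{μ̄∈Δ(𝓟)} rfdec_γ(𝓜, μ̄)`. -/
def rfdecBar (γ : ℝ) (Trans : ιP → Pol → Measure O) (Rew : ιR → O → Fin H → ℝ)
    (πopt : ιP → ιR → Pol) : ℝ :=
  ⨆ μbar : ProbDist ιP, rfdec γ Trans Rew πopt μbar

/- ## Auxiliary lemmas -/

lemma hellingerSq_nonneg {Ω : Type*} [MeasurableSpace Ω] (P Q : Measure Ω) :
    0 ≤ hellingerSq P Q :=
  integral_nonneg fun _ => sq_nonneg _

lemma hellingerSq_le_two {Ω : Type*} [MeasurableSpace Ω] (P Q : Measure Ω)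
    [IsProbabilityMeasure P] [IsProbabilityMeasure Q] : hellingerSq P Q ≤ 2 := by
  have hPint : Integrable (fun x => (P.rnDeriv (P + Q) x).toReal) (P + Q) :=
    Measure.integrable_toReal_rnDeriv
  have hQint : Integrable (fun x => (Q.rnDeriv (P + Q) x).toReal) (P + Q) :=
    Measure.integrable_toReal_rnDeriv
  have hble : ∀ x, (Real.sqrt ((P.rnDeriv (P + Q) x).toReal)
      - Real.sqrt ((Q.rnDeriv (P + Q) x).toReal)) ^ 2
      ≤ (P.rnDeriv (P + Q) x).toReal + (Q.rnDeriv (P + Q) x).toReal := by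
    intro x
    have ha := Real.sq_sqrt (ENNReal.toReal_nonneg (a := P.rnDeriv (P + Q) x))
    have hb := Real.sq_sqrt (ENNReal.toReal_nonneg (a := Q.rnDeriv (P + Q) x))
    nlinarith [mul_nonneg (Real.sqrt_nonneg ((P.rnDeriv (P + Q) x).toReal))
        (Real.sqrt_nonneg ((Q.rnDeriv (P + Q) x).toReal))]
  have h1 : hellingerSq P Q ≤ ∫ x, ((P.rnDeriv (P + Q) x).toReal
      + (Q.rnDeriv (P + Q) x).toReal) ∂(P + Q) :=
    integral_mono_of_nonneg (Filter.Eventually.of_forall fun _ => sq_nonneg _)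
      (hPint.add hQint) (Filter.Eventually.of_forall hble)
  rw [integral_add hPint hQint] at h1
  have h2 : ∫ x, (P.rnDeriv (P + Q) x).toReal ∂(P + Q) ≤ 1 := by
    have := Measure.setIntegral_toReal_rnDeriv_le (μ := P) (ν := P + Q)
      (s := Set.univ) (by simp)
    simpa using this
  have h3 : ∫ x, (Q.rnDeriv (P + Q) x).toReal ∂(P + Q) ≤ 1 := by
    have := Measure.setIntegral_toReal_rnDeriv_le (μ := Q) (ν := P + Q)
      (s := Set.univ) (by simp)
    simpa using this
  linarith

instance ProbDist.instNonempty (ι : Type*) [Fintype ι] [Nonempty ι] :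
    Nonempty (ProbDist ι) := by
  refine ⟨⟨fun _ => 1 / (Fintype.card ι : ℝ), fun i => by positivity, ?_⟩⟩
  have hc : (0 : ℝ) < (Fintype.card ι : ℝ) := by
    exact_mod_cast Fintype.card_pos
  rw [Finset.sum_const, Finset.card_univ, nsmul_eq_mul]
  field_simp

section Bounds

variable (Trans : ιP → Pol → Measure O) (Rew : ιR → O → Fin H → ℝ)

lemma fval_nonneg (hTrans : ∀ p π, IsProbabilityMeasure (Trans p π))
    (hRew_nonneg : ∀ r o h, 0 ≤ Rew r o h) (p : ιP) (r : ιR) (π : Pol) :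
    0 ≤ fval Trans Rew p r π :=
  integral_nonneg fun o => Finset.sum_nonneg fun h _ => hRew_nonneg r o h

lemma fval_le_one (hTrans : ∀ p π, IsProbabilityMeasure (Trans p π))
    (hRew_nonneg : ∀ r o h, 0 ≤ Rew r o h)
    (hRew_sum : ∀ r o, ∑ h, Rew r o h ≤ 1) (p : ιP) (r : ιR) (π : Pol) :
    fval Trans Rew p r π ≤ 1 := by
  haveI := hTrans p π
  have := integral_mono_of_nonneg (μ := Trans p π)
    (f := fun o => ∑ h, Rew r o h) (g := fun _ => (1 : ℝ))
    (Filter.Eventually.of_forall fun o => Finset.sum_nonneg fun h _ => hRew_nonneg r o h)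
    (integrable_const 1) (Filter.Eventually.of_forall fun o => hRew_sum r o)
  simpa [fval] using this

variable (πopt : ιP → ιR → Pol) {γ : ℝ}

/-- Regret term bounds. -/
lemma reg_bounds (hTrans : ∀ p π, IsProbabilityMeasure (Trans p π))
    (hRew_nonneg : ∀ r o h, 0 ≤ Rew r o h)
    (hRew_sum : ∀ r o, ∑ h, Rew r o h ≤ 1)
    (hπopt : ∀ p r π, fval Trans Rew p r π ≤ fval Trans Rew p r (πopt p r))
    (pout : ProbDist Pol) (p : ιP) (r : ιR) :
    0 ≤ (∑ π, pout.1 π * (fval Trans Rew p r (πopt p r) - fval Trans Rew p r π)) ∧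
    (∑ π, pout.1 π * (fval Trans Rew p r (πopt p r) - fval Trans Rew p r π)) ≤ 1 := by
  constructor
  · exact Finset.sum_nonneg fun π _ =>
      mul_nonneg (pout.2.1 π) (sub_nonneg.mpr (hπopt p r π))
  · calc (∑ π, pout.1 π * (fval Trans Rew p r (πopt p r) - fval Trans Rew p r π))
        ≤ ∑ π, pout.1 π * 1 := by
          refine Finset.sum_le_sum fun π _ => mul_le_mul_of_nonneg_left ?_ (pout.2.1 π)
          have h1 := fval_le_one Trans Rew hTrans hRew_nonneg hRew_sum p r (πopt p r)
          have h2 := fval_nonneg Trans Rew hTrans hRew_nonneg p r π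
          linarith
      _ = 1 := by simp [pout.2.2]

/-- Estimation term bounds. -/
lemma est_bounds (hTrans : ∀ p π, IsProbabilityMeasure (Trans p π))
    (μ : ProbDist ιP) (pexp : ProbDist Pol) (p : ιP) :
    0 ≤ (∑ π, pexp.1 π * ∑ q, μ.1 q * hellingerSq (Trans p π) (Trans q π)) ∧
    (∑ π, pexp.1 π * ∑ q, μ.1 q * hellingerSq (Trans p π) (Trans q π)) ≤ 2 := by
  constructor
  · exact Finset.sum_nonneg fun π _ => mul_nonneg (pexp.2.1 π)
      (Finset.sum_nonneg fun q _ => mul_nonneg (μ.2.1 q) (hellingerSq_nonneg _ _))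
  · calc (∑ π, pexp.1 π * ∑ q, μ.1 q * hellingerSq (Trans p π) (Trans q π))
        ≤ ∑ π, pexp.1 π * 2 := by
          refine Finset.sum_le_sum fun π _ => mul_le_mul_of_nonneg_left ?_ (pexp.2.1 π)
          calc (∑ q, μ.1 q * hellingerSq (Trans p π) (Trans q π))
              ≤ ∑ q, μ.1 q * 2 := by
                refine Finset.sum_le_sum fun q _ =>
                  mul_le_mul_of_nonneg_left ?_ (μ.2.1 q)
                haveI := hTrans p π; haveI := hTrans q π
                exact hellingerSq_le_two _ _
            _ = 2 := by rw [← Finset.sum_mul, μ.2.2, one_mul]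
      _ = 2 := by rw [← Finset.sum_mul, pexp.2.2, one_mul]

end Bounds

/-- Theorem (Reward-Free E2D): if at each round `t` the exploration distribution
`p_exp^t` minimizes `sup_{R} V̂^{μ^t}_{rf,γ}(·, R)` and, for each reward `R`, the output
distribution `p_out^t(R)` attains the inner infimum, then the reward-free suboptimality
against the true transition `P* = Trans pstar` is bounded by
`rfdec̄_γ(𝓜) + (γ/T)·Est`. -/
theorem reward_free_e2d
    [Nonempty Pol] [Nonempty ιP] [Nonempty ιR] (hH : 1 ≤ H)
    (Trans : ιP → Pol → Measure O)
    (hTrans : ∀ p π, IsProbabilityMeasure (Trans p π))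
    (Rew : ιR → O → Fin H → ℝ)
    (hRewMeas : ∀ r h, Measurable fun o => Rew r o h)
    (hRew_nonneg : ∀ r o h, 0 ≤ Rew r o h)
    (hRew_le_one : ∀ r o h, Rew r o h ≤ 1)
    (hRew_sum : ∀ r o, ∑ h, Rew r o h ≤ 1)
    (πopt : ιP → ιR → Pol)
    (hπopt : ∀ p r π, fval Trans Rew p r π ≤ fval Trans Rew p r (πopt p r))
    (γ : ℝ) (hγ : 0 < γ)
    (T : ℕ) (hT : 1 ≤ T) (pstar : ιP)
    (μt : Fin T → ProbDist ιP)
    (pexp : Fin T → ProbDist Pol)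
    (pout : Fin T → ιR → ProbDist Pol)
    (hexp : ∀ (t : Fin T) (q : ProbDist Pol),
      (⨆ r : ιR, Vrf γ Trans Rew πopt (μt t) (pexp t) r)
        ≤ ⨆ r : ιR, Vrf γ Trans Rew πopt (μt t) q r)
    (hout : ∀ (t : Fin T) (r : ιR) (q : ProbDist Pol),
      Grf γ Trans Rew πopt (μt t) (pexp t) r (pout t r)
        ≤ Grf γ Trans Rew πopt (μt t) (pexp t) r q) :
    (⨆ r : ιR, (fval Trans Rew pstar r (πopt pstar r)
        - (1 / T) * ∑ t, ∑ π, (pout t r).1 π * fval Trans Rew pstar r π))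
      ≤ rfdecBar γ Trans Rew πopt
        + (γ / T) * ∑ t, ∑ π, (pexp t).1 π *
            ∑ q, (μt t).1 q * hellingerSq (Trans pstar π) (Trans q π) := by
  have hγ0 : (0:ℝ) ≤ γ := hγ.le
  -- term bounds
  have hterm_lb : ∀ (μ : ProbDist ιP) (pe : ProbDist Pol) (r : ιR) (po : ProbDist Pol)
      (p : ιP), -(2*γ) ≤
      (∑ π, po.1 π * (fval Trans Rew p r (πopt p r) - fval Trans Rew p r π))
        - γ * ∑ π, pe.1 π * ∑ q, μ.1 q * hellingerSq (Trans p π) (Trans q π) := by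
    intro μ pe r po p
    have h1 := (reg_bounds Trans Rew πopt hTrans hRew_nonneg hRew_sum hπopt po p r).1
    have h2 := (est_bounds Trans hTrans μ pe p).2
    nlinarith
  have hterm_ub : ∀ (μ : ProbDist ιP) (pe : ProbDist Pol) (r : ιR) (po : ProbDist Pol)
      (p : ιP),
      (∑ π, po.1 π * (fval Trans Rew p r (πopt p r) - fval Trans Rew p r π))
        - γ * ∑ π, pe.1 π * ∑ q, μ.1 q * hellingerSq (Trans p π) (Trans q π) ≤ 1 := by
    intro μ pe r po p
    have h1 := (reg_bounds Trans Rew πopt hTrans hRew_nonneg hRew_sum hπopt po p r).2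
    have h2 := (est_bounds Trans hTrans μ pe p).1
    nlinarith
  -- Grf bounds
  have hGrf_lb : ∀ (μ : ProbDist ιP) (pe : ProbDist Pol) (r : ιR) (po : ProbDist Pol),
      -(2*γ) ≤ Grf γ Trans Rew πopt μ pe r po := by
    intro μ pe r po
    obtain ⟨p⟩ := (inferInstance : Nonempty ιP)
    refine le_trans (hterm_lb μ pe r po p) ?_
    unfold Grf
    apply le_ciSup (Set.Finite.bddAbove (Set.finite_range _)) p
  have hGrf_ub : ∀ (μ : ProbDist ιP) (pe : ProbDist Pol) (r : ιR) (po : ProbDist Pol),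
      Grf γ Trans Rew πopt μ pe r po ≤ 1 := fun μ pe r po =>
    ciSup_le fun p => hterm_ub μ pe r po p
  -- Vrf bounds
  have hVrf_lb : ∀ (μ : ProbDist ιP) (pe : ProbDist Pol) (r : ιR),
      -(2*γ) ≤ Vrf γ Trans Rew πopt μ pe r := fun μ pe r =>
    le_ciInf fun po => hGrf_lb μ pe r po
  have hVrf_ub : ∀ (μ : ProbDist ιP) (pe : ProbDist Pol) (r : ιR),
      Vrf γ Trans Rew πopt μ pe r ≤ 1 := by
    intro μ pe r
    obtain ⟨po⟩ := (inferInstance : Nonempty (ProbDist Pol))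
    exact le_trans (ciInf_le ⟨-(2*γ), fun x ⟨q, hq⟩ => hq ▸ hGrf_lb μ pe r q⟩ po)
      (hGrf_ub μ pe r po)
  -- sup_r Vrf bounds
  have hSup_lb : ∀ (μ : ProbDist ιP) (pe : ProbDist Pol),
      -(2*γ) ≤ ⨆ r : ιR, Vrf γ Trans Rew πopt μ pe r := by
    intro μ pe
    obtain ⟨r⟩ := (inferInstance : Nonempty ιR)
    exact le_trans (hVrf_lb μ pe r)
      (le_ciSup (Set.Finite.bddAbove (Set.finite_range _)) r)
  -- rfdec = inf over pexp of sup_r Vrf, definitional equality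
  have hrfdec_eq : ∀ μ : ProbDist ιP, rfdec γ Trans Rew πopt μ
      = ⨅ pe : ProbDist Pol, ⨆ r : ιR, Vrf γ Trans Rew πopt μ pe r := fun _ => rfl
  have hrfdec_ub : ∀ μ : ProbDist ιP, rfdec γ Trans Rew πopt μ ≤ 1 := by
    intro μ
    rw [hrfdec_eq]
    obtain ⟨pe⟩ := (inferInstance : Nonempty (ProbDist Pol))
    refine le_trans (ciInf_le ⟨-(2*γ), fun x ⟨q, hq⟩ => hq ▸ hSup_lb μ q⟩ pe) ?_
    exact ciSup_le fun r => hVrf_ub μ pe r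
  -- core per-round bound
  have hT0 : (0:ℝ) < (T:ℝ) := by exact_mod_cast hT
  have key : ∀ (t : Fin T) (r : ιR),
      (∑ π, (pout t r).1 π * (fval Trans Rew pstar r (πopt pstar r)
          - fval Trans Rew pstar r π))
        ≤ rfdecBar γ Trans Rew πopt
          + γ * ∑ π, (pexp t).1 π *
              ∑ q, (μt t).1 q * hellingerSq (Trans pstar π) (Trans q π) := by
    intro t r
    have h1 : (∑ π, (pout t r).1 π * (fval Trans Rew pstar r (πopt pstar r)
          - fval Trans Rew pstar r π))
        - γ * ∑ π, (pexp t).1 π *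
            ∑ q, (μt t).1 q * hellingerSq (Trans pstar π) (Trans q π)
        ≤ Grf γ Trans Rew πopt (μt t) (pexp t) r (pout t r) := by
      unfold Grf
      apply le_ciSup (Set.Finite.bddAbove (Set.finite_range _)) pstar
    have h2 : Grf γ Trans Rew πopt (μt t) (pexp t) r (pout t r)
        ≤ Vrf γ Trans Rew πopt (μt t) (pexp t) r := le_ciInf (hout t r)
    have h3 : Vrf γ Trans Rew πopt (μt t) (pexp t) r
        ≤ ⨆ r' : ιR, Vrf γ Trans Rew πopt (μt t) (pexp t) r' :=
      le_ciSup (Set.Finite.bddAbove (Set.finite_range _)) r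
    have h4 : (⨆ r' : ιR, Vrf γ Trans Rew πopt (μt t) (pexp t) r')
        ≤ rfdec γ Trans Rew πopt (μt t) := by
      rw [hrfdec_eq]
      exact le_ciInf (hexp t)
    have h5 : rfdec γ Trans Rew πopt (μt t) ≤ rfdecBar γ Trans Rew πopt :=
      le_ciSup ⟨1, fun x ⟨q, hq⟩ => hq ▸ hrfdec_ub q⟩ (μt t)
    linarith
  -- assemble
  refine ciSup_le fun r => ?_
  have hreg : fval Trans Rew pstar r (πopt pstar r)
      - (1 / T) * ∑ t, ∑ π, (pout t r).1 π * fval Trans Rew pstar r π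
      = (1 / T) * ∑ t, ∑ π, (pout t r).1 π *
          (fval Trans Rew pstar r (πopt pstar r) - fval Trans Rew pstar r π) := by
    have : ∀ t : Fin T, (∑ π, (pout t r).1 π *
        (fval Trans Rew pstar r (πopt pstar r) - fval Trans Rew pstar r π))
        = fval Trans Rew pstar r (πopt pstar r)
          - ∑ π, (pout t r).1 π * fval Trans Rew pstar r π := by
      intro t
      rw [Finset.sum_congr rfl (fun π _ => mul_sub ((pout t r).1 π) _ _),
        Finset.sum_sub_distrib, ← Finset.sum_mul, (pout t r).2.2, one_mul]
    rw [Finset.sum_congr rfl fun t _ => this t, Finset.sum_sub_distrib,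
      Finset.sum_const, Finset.card_univ, Fintype.card_fin]
    field_simp
    ring
  rw [hreg]
  have hsum : (∑ t, ∑ π, (pout t r).1 π *
      (fval Trans Rew pstar r (πopt pstar r) - fval Trans Rew pstar r π))
      ≤ ∑ t : Fin T, (rfdecBar γ Trans Rew πopt
          + γ * ∑ π, (pexp t).1 π *
              ∑ q, (μt t).1 q * hellingerSq (Trans pstar π) (Trans q π)) :=
    Finset.sum_le_sum fun t _ => key t r
  have hfinal : (1 / (T:ℝ)) * ∑ t : Fin T, (rfdecBar γ Trans Rew πopt
      + γ * ∑ π, (pexp t).1 π *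
          ∑ q, (μt t).1 q * hellingerSq (Trans pstar π) (Trans q π))
      = rfdecBar γ Trans Rew πopt
        + (γ / T) * ∑ t, ∑ π, (pexp t).1 π *
            ∑ q, (μt t).1 q * hellingerSq (Trans pstar π) (Trans q π) := by
    rw [Finset.sum_add_distrib, Finset.sum_const, Finset.card_univ, Fintype.card_fin,
      ← Finset.mul_sum]
    field_simp
    ring
  calc (1 / (T:ℝ)) * ∑ t, ∑ π, (pout t r).1 π *
      (fval Trans Rew pstar r (πopt pstar r) - fval Trans Rew pstar r π)
      ≤ (1 / (T:ℝ)) * ∑ t : Fin T, (rfdecBar γ Trans Rew πopt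
          + γ * ∑ π, (pexp t).1 π *
              ∑ q, (μt t).1 q * hellingerSq (Trans pstar π) (Trans q π)) := by
        apply mul_le_mul_of_nonneg_left hsum (by positivity)
    _ = _ := hfinal
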